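/- arXiv:2403.13165 — 3 statements merged into one kernel-verified Lean document; each statement's English description precedes it below -/
import Mathlib

section
/- No functor M from the category H⁺ of set-system hypergraphs with weak homomorphisms to the category H of set-system hypergraphs with traditional homomorphisms satisfies M(G) = G for all objects G. -/
/-- A set-system hypergraph: edge set, vertex set, and endpoint assignment. -/
structure SSHyp : Type 1 where
  E : Type
  V : Type
  eps : E → Set V

/-- A traditional set-system hypergraph homomorphism. -/
structure TradHom (G H : SSHyp) where
  fe : G.E → H.E
  fv : G.V → H.V
  comm : ∀ e, H.eps (fe e) = fv '' G.eps e

/-- A weak set-system hypergraph homomorphism. -/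
structure WeakHom (G H : SSHyp) where
  fe : G.E → H.E
  fv : G.V → H.V
  sub : ∀ e, fv '' G.eps e ⊆ H.eps (fe e)

def TradHom.idH (G : SSHyp) : TradHom G G :=
  ⟨id, id, fun e => (Set.image_id _).symm⟩

def WeakHom.idH (G : SSHyp) : WeakHom G G :=
  ⟨id, id, fun e => by simp⟩

def TradHom.comp {G H K : SSHyp} (φ : TradHom G H) (ψ : TradHom H K) : TradHom G K :=
  ⟨ψ.fe ∘ φ.fe, ψ.fv ∘ φ.fv, fun e => by
    rw [Function.comp_apply, ψ.comm, φ.comm, Set.image_comp]⟩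

def WeakHom.comp {G H K : SSHyp} (φ : WeakHom G H) (ψ : WeakHom H K) : WeakHom G K :=
  ⟨ψ.fe ∘ φ.fe, ψ.fv ∘ φ.fv, fun e => by
    rw [Set.image_comp]
    exact (Set.image_mono (φ.sub e)).trans (ψ.sub (φ.fe e))⟩

/-! A weak homomorphism may send an empty edge onto a nonempty one, while a traditional
homomorphism maps empty edges to empty edges. So already the one-edge hypergraphs with an empty
and with a nonempty edge admit a weak homomorphism but no traditional one, and `M` has nowhere
to send it. -/

open Set

theorem TradHom.eps_fe_eq_empty {G H : SSHyp} (φ : TradHom G H) {e : G.E} (he : G.eps e = ∅) :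
    H.eps (φ.fe e) = ∅ := by
  rw [φ.comm, he, image_empty]

def SSHyp.emptyEdge : SSHyp := ⟨Unit, Empty, fun _ => ∅⟩

def SSHyp.fullEdge : SSHyp := ⟨Unit, Unit, fun _ => univ⟩

def WeakHom.emptyEdgeToFullEdge : WeakHom SSHyp.emptyEdge SSHyp.fullEdge :=
  ⟨id, Empty.elim, fun _ => subset_univ _⟩

theorem TradHom.isEmpty_emptyEdge_fullEdge : IsEmpty (TradHom SSHyp.emptyEdge SSHyp.fullEdge) :=
  ⟨fun φ => (univ_nonempty (α := Unit)).ne_empty (φ.eps_fe_eq_empty (e := ()) rfl)⟩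

/-- No functor `M : H⁺ → H` from set-system hypergraphs with weak homomorphisms to
set-system hypergraphs with traditional homomorphisms satisfies `M(G) = G` on objects. -/
theorem no_identity_on_objects_functor :
    ¬ ∃ M : ∀ G H : SSHyp, WeakHom G H → TradHom G H,
      (∀ G : SSHyp, M G G (WeakHom.idH G) = TradHom.idH G) ∧
      (∀ (G H K : SSHyp) (φ : WeakHom G H) (ψ : WeakHom H K),
        M G K (φ.comp ψ) = (M G H φ).comp (M H K ψ)) := by
  rintro ⟨M, -, -⟩
  exact TradHom.isEmpty_emptyEdge_fullEdge.false (M _ _ WeakHom.emptyEdgeToFullEdge)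
end

section
/- The factored clique-replacement functor R from set-system hypergraphs to simple graphs admits a right adjoint R★ given by simplicial closure: for every graph G and graph homomorphism f : R(H) → G, there is a unique hypergraph homomorphism f̂ : H → R★(G) such that θ_G ∘ R(f̂) = f, where θ_G is the identity vertex map. -/
/-- A set system. -/
structure SetSys : Type 1 where
  V : Type
  edges : Set (Set V)

/-- A graph is a set system whose edges all have cardinality 1 or 2. -/
def IsGraph (G : SetSys) : Prop := ∀ A ∈ G.edges, ∃ v w, A = {v, w}

/-- A set-system (graph) homomorphism. -/
def IsSSHom (G H : SetSys) (f : G.V → H.V) : Prop :=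
  ∀ A ∈ G.edges, f '' A ∈ H.edges

/-- The clique replacement functor `R` on objects: the graph whose edges are all pairs
`{v,w}` contained in a common edge of `H`. -/
def Robj (H : SSHyp) : SetSys :=
  ⟨H.V, {A | ∃ v w e, A = {v, w} ∧ v ∈ H.eps e ∧ w ∈ H.eps e}⟩

/-- The clique replacement functor `R` on homomorphisms: the vertex function. -/
def Rhom {G H : SSHyp} (φ : TradHom G H) :
    {f : (Robj G).V → (Robj H).V // IsSSHom (Robj G) (Robj H) f} :=
  ⟨φ.fv, fun A hA => by
    obtain ⟨v, w, e, rfl, hv, hw⟩ := hA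
    refine ⟨φ.fv v, φ.fv w, φ.fe e, ?_, ?_, ?_⟩
    · exact Set.image_pair _ _ _
    · rw [φ.comm]; exact ⟨v, hv, rfl⟩
    · rw [φ.comm]; exact ⟨w, hw, rfl⟩⟩

/-- The simplicial closure `R★(G)`: edges are all subsets `A` of `V(G)` such that every
pair from `A` is an edge of `G`. -/
def Rstar (G : SetSys) : SSHyp :=
  ⟨{A : Set G.V // ∀ v ∈ A, ∀ w ∈ A, ({v, w} : Set G.V) ∈ G.edges}, G.V,
    fun A => A.val⟩

/-- The counit `θ_G : R(R★(G)) → G`: the identity vertex map. -/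
def thetaR (G : SetSys) : {f : (Robj (Rstar G)).V → G.V // IsSSHom (Robj (Rstar G)) G f} :=
  ⟨id, fun A hA => by
    obtain ⟨v, w, e, rfl, hv, hw⟩ := hA
    exact (Set.image_id _ : _).symm ▸ e.property v hv w hw⟩

theorem Rstar_eps_injective (G : SetSys) : Function.Injective (Rstar G).eps :=
  Subtype.val_injective

theorem TradHom.ext_of_fv_eq {H K : SSHyp} (hK : Function.Injective K.eps)
    {φ ψ : TradHom H K} (h : φ.fv = ψ.fv) : φ = ψ := by
  obtain ⟨fe, fv, comm⟩ := φ
  obtain ⟨fe', fv', comm'⟩ := ψ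
  subst h
  congr
  funext e
  exact hK ((comm e).trans (comm' e).symm)

theorem IsSSHom.pair_mem_of_mem_image_eps {H : SSHyp} {G : SetSys} {f : H.V → G.V}
    (hf : IsSSHom (Robj H) G f) (e : H.E) :
    ∀ v ∈ f '' H.eps e, ∀ w ∈ f '' H.eps e, ({v, w} : Set G.V) ∈ G.edges := by
  rintro _ ⟨a, ha, rfl⟩ _ ⟨b, hb, rfl⟩
  rw [← Set.image_pair]
  exact hf _ ⟨a, b, e, rfl, ha, hb⟩

def liftRstar {H : SSHyp} {G : SetSys} (f : H.V → G.V) (hf : IsSSHom (Robj H) G f) :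
    TradHom H (Rstar G) where
  fe e := ⟨f '' H.eps e, hf.pair_mem_of_mem_image_eps e⟩
  fv := f
  comm _ := rfl

theorem simplicial_closure_right_adjoint_general (G : SetSys) (H : SSHyp)
    (f : {f : (Robj H).V → G.V // IsSSHom (Robj H) G f}) :
    ∃! fh : TradHom H (Rstar G), (thetaR G).val ∘ (Rhom fh).val = f.val :=
  ⟨liftRstar f.val f.property, rfl,
    fun _ hfh => TradHom.ext_of_fv_eq (Rstar_eps_injective G) hfh⟩

/-- The factored clique replacement functor `R` admits the simplicial closure `R★` as a
right adjoint: every graph homomorphism `f : R(H) → G` factors uniquely through `θ_G`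
by a hypergraph homomorphism `f̂ : H → R★(G)`. -/
theorem simplicial_closure_right_adjoint (G : SetSys) (hG : IsGraph G) (H : SSHyp)
    (f : {f : (Robj H).V → G.V // IsSSHom (Robj H) G f}) :
    ∃! fh : TradHom H (Rstar G), (thetaR G).val ∘ (Rhom fh).val = f.val :=
  simplicial_closure_right_adjoint_general G H f
end

section
/- The factored intersection functor Λ := S_M ∘ del ∘ N★ ∘ (−)‡ ∘ N_{H⁺} from set-system hypergraphs to simple graphs acts as: VΛ(G) = E(G), EΛ(G) = {{e,f} : ε_G(e) ∩ ε_G(f) ≠ ∅}, and Λ(φ) = E(φ) on traditional homomorphisms. -/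
/-- The inclusion `N_{H⁺} : H → H⁺`. -/
def TradHom.toWeak {G H : SSHyp} (φ : TradHom G H) : WeakHom G H :=
  ⟨φ.fe, φ.fv, fun e => le_of_eq (φ.comm e).symm⟩

/-- The dual hypergraph `G‡`. -/
def ddag (G : SSHyp) : SSHyp :=
  ⟨G.V, G.E, fun v => {e | v ∈ G.eps e}⟩

/-- The action of `(−)‡` on weak homomorphisms. -/
def ddagHom {G H : SSHyp} (φ : WeakHom G H) : WeakHom (ddag G) (ddag H) :=
  ⟨φ.fv, φ.fe, fun v => by
    rintro _ ⟨e, he, rfl⟩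
    exact φ.sub e ⟨v, he, rfl⟩⟩

/-- `N★`: simplicial replacement. -/
def Nstar (G : SSHyp) : SSHyp :=
  ⟨{p : G.E × Set G.V // p.2 ⊆ G.eps p.1}, G.V, fun p => p.val.2⟩

/-- The action of `N★` on weak homomorphisms (yielding traditional homomorphisms). -/
def NstarHom {G H : SSHyp} (φ : WeakHom G H) : TradHom (Nstar G) (Nstar H) :=
  ⟨fun p => ⟨(φ.fe p.val.1, φ.fv '' p.val.2),
      (Set.image_mono p.property).trans (φ.sub _)⟩,
    φ.fv, fun _ => rfl⟩

/-- `del`: deletion of all edges not of cardinality 1 or 2. -/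
def delM (M : SSHyp) : SSHyp :=
  ⟨{e : M.E // ∃ v w, M.eps e = {v, w}}, M.V, fun e => M.eps e.val⟩

/-- The action of `del` on traditional homomorphisms. -/
def delMHom {M M' : SSHyp} (ψ : TradHom M M') : TradHom (delM M) (delM M') :=
  ⟨fun e => ⟨ψ.fe e.val, by
      obtain ⟨v, w, h⟩ := e.property
      exact ⟨ψ.fv v, ψ.fv w, by
        rw [ψ.comm, h, Set.image_insert_eq, Set.image_singleton]⟩⟩,
    ψ.fv, fun e => ψ.comm e.val⟩

/-- `S_M`: multigraph simplification to a set system (simple graph). -/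
def SM (M : SSHyp) : SetSys :=
  ⟨M.V, {A | ∃ e, A = M.eps e}⟩

/-- The action of `S_M` on traditional homomorphisms. -/
def SMHom {M M' : SSHyp} (ψ : TradHom M M') :
    {f : (SM M).V → (SM M').V // IsSSHom (SM M) (SM M') f} :=
  ⟨ψ.fv, fun A hA => by
    obtain ⟨e, rfl⟩ := hA
    exact ⟨ψ.fe e, (ψ.comm e).symm⟩⟩

/-- The factored intersection functor `Λ := S_M ∘ del ∘ N★ ∘ (−)‡ ∘ N_{H⁺}` on objects. -/
def Lamobj (G : SSHyp) : SetSys := SM (delM (Nstar (ddag G)))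

/-- The factored intersection functor on traditional homomorphisms. -/
def Lamhom {G H : SSHyp} (φ : TradHom G H) :
    {f : (Lamobj G).V → (Lamobj H).V // IsSSHom (Lamobj G) (Lamobj H) f} :=
  SMHom (delMHom (NstarHom (ddagHom φ.toWeak)))

theorem mem_edges_SM_delM_Nstar_iff (K : SSHyp) (A : Set K.V) :
    A ∈ (SM (delM (Nstar K))).edges ↔ ∃ v w, A = {v, w} ∧ ∃ e, {v, w} ⊆ K.eps e := by
  constructor
  · rintro ⟨⟨⟨⟨e, B⟩, hB⟩, v, w, hvw⟩, rfl⟩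
    exact ⟨v, w, hvw, e, hvw ▸ hB⟩
  · rintro ⟨v, w, rfl, e, he⟩
    exact ⟨⟨⟨⟨e, {v, w}⟩, he⟩, v, w, rfl⟩, rfl⟩

theorem pair_subset_ddag_eps_iff (G : SSHyp) (x : G.V) (e f : G.E) :
    ({e, f} : Set (ddag G).V) ⊆ (ddag G).eps x ↔ x ∈ G.eps e ∩ G.eps f := by
  refine ⟨fun h => ⟨h (.inl rfl), h (.inr rfl)⟩, ?_⟩
  rintro ⟨he, hf⟩ _ (rfl | rfl) <;> assumption

/-- Action of the factored intersection functor `Λ`: vertices of `Λ(G)` are the edges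
of `G`, edges are the pairs `{e,f}` whose endpoint sets intersect, and the action on a
homomorphism `φ` is its edge function `E(φ)`. -/
theorem factored_intersection_action :
    (∀ G : SSHyp, (Lamobj G).V = G.E) ∧
    (∀ G : SSHyp, (Lamobj G).edges =
      {A : Set G.E | ∃ e f, A = {e, f} ∧ (G.eps e ∩ G.eps f).Nonempty}) ∧
    (∀ (G H : SSHyp) (φ : TradHom G H), (Lamhom φ).val = φ.fe) := by
  refine ⟨fun G => rfl, fun G => ?_, fun G H φ => rfl⟩
  ext A
  refine (mem_edges_SM_delM_Nstar_iff (ddag G) A).trans ?_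
  exact exists₂_congr fun e f => and_congr_right fun _ =>
    exists_congr fun x => pair_subset_ddag_eps_iff G x e f
end
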